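/- arXiv:1702.06381 — 3 statements merged into one kernel-verified Lean document; each statement's English description precedes it below -/
import Mathlib

section
/- Let B be a nonzero vector in ℂ^n and α, β > 0. The unique minimizer of the function f(x) = α‖x‖₂ + (β/2)‖x − B‖₂² over x ∈ ℂ^n is x̂ = max{‖B‖₂ − α/β, 0} · B/‖B‖₂. -/
/-!
Write `b = ‖B‖` and `t = max (b - α/β) 0`. By the reverse triangle inequality
`‖x - B‖ ≥ |‖x‖ - b|`, so `f x ≥ g ‖x‖` with `g r = α r + (β/2)(r - b)²`, and on `r ≥ 0` the
scalar function `g` has the unique minimizer `t`. The point `(t/b) • B` attains `g t`. Conversely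
a minimizer `y` has `‖y‖ = t` and `‖B - y‖ ≤ b - t`, so `‖y‖ + ‖B - y‖ = ‖B‖`; by strict
convexity of the norm `y` lies on the ray through `B`, hence `y = (t/b) • B`.
-/

section Scalar

variable {α β b r : ℝ}

lemma max_sub_div_zero_le (hα : 0 ≤ α) (hβ : 0 < β) (hb : 0 ≤ b) : max (b - α / β) 0 ≤ b :=
  max_le (sub_le_self _ (div_nonneg hα hβ.le)) hb

lemma soft_threshold_scalar_lt (hβ : 0 < β) (hr : 0 ≤ r)
    (hne : r ≠ max (b - α / β) 0) :
    α * max (b - α / β) 0 + β / 2 * (max (b - α / β) 0 - b) ^ 2 < α * r + β / 2 * (r - b) ^ 2 := by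
  have hαβ : β * (α / β) = α := mul_div_cancel₀ α hβ.ne'
  rcases le_total (b - α / β) 0 with h | h
  · rw [max_eq_right h] at hne ⊢
    have hr' : 0 < r := lt_of_le_of_ne hr (Ne.symm hne)
    -- here `β b ≤ α`, so `g r - g 0 = r (α - β b) + (β/2) r² > 0`
    have hβb : β * b ≤ α := by nlinarith
    nlinarith [mul_nonneg hr (sub_nonneg.mpr hβb), mul_pos hβ (mul_pos hr' hr')]
  · rw [max_eq_left h] at hne ⊢
    -- completing the square: `g r - g t = (β/2) (r - t)²`
    have hsq : 0 < (r - (b - α / β)) ^ 2 := sq_pos_of_ne_zero (sub_ne_zero.mpr hne)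
    nlinarith [mul_pos hβ hsq]

end Scalar

noncomputable section Shrinkage

variable {E : Type*} [NormedAddCommGroup E] {α β : ℝ} {B : E}

def shrinkageObjective (α β : ℝ) (B x : E) : ℝ := α * ‖x‖ + β / 2 * ‖x - B‖ ^ 2

lemma le_shrinkageObjective (hβ : 0 ≤ β) (x : E) :
    α * ‖x‖ + β / 2 * (‖x‖ - ‖B‖) ^ 2 ≤ shrinkageObjective α β B x := by
  have h := abs_norm_sub_norm_le x B
  have : (‖x‖ - ‖B‖) ^ 2 ≤ ‖x - B‖ ^ 2 := sq_le_sq' (abs_le.mp h).1 (abs_le.mp h).2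
  unfold shrinkageObjective
  gcongr

variable [NormedSpace ℝ E]

def shrinkage (α β : ℝ) (B : E) : E := max (‖B‖ - α / β) 0 • (‖B‖⁻¹ • B)

lemma norm_shrinkage (hα : 0 ≤ α) (hβ : 0 < β) :
    ‖shrinkage α β B‖ = max (‖B‖ - α / β) 0 := by
  rcases eq_or_ne B 0 with rfl | hB
  · simp [shrinkage, div_nonneg hα hβ.le]
  · rw [shrinkage, norm_smul, norm_smul, norm_inv, norm_norm,
      inv_mul_cancel₀ (norm_ne_zero_iff.mpr hB), mul_one, Real.norm_of_nonneg (le_max_right _ _)]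

lemma norm_shrinkage_sub (hα : 0 ≤ α) (hβ : 0 < β) :
    ‖shrinkage α β B - B‖ = ‖B‖ - max (‖B‖ - α / β) 0 := by
  rcases eq_or_ne B 0 with rfl | hB
  · simp [shrinkage, div_nonneg hα hβ.le]
  · have hb : 0 < ‖B‖ := norm_pos_iff.mpr hB
    set t := max (‖B‖ - α / β) 0
    have hcoef : t * ‖B‖⁻¹ - 1 ≤ 0 := by
      rw [sub_nonpos, ← div_eq_mul_inv, div_le_one hb]
      exact max_sub_div_zero_le hα hβ hb.le
    have hsub : (t * ‖B‖⁻¹) • B - B = (t * ‖B‖⁻¹ - 1) • B := by rw [sub_smul, one_smul]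
    rw [shrinkage, smul_smul, hsub, norm_smul, Real.norm_of_nonpos hcoef]
    field_simp
    ring

lemma shrinkageObjective_shrinkage (hα : 0 ≤ α) (hβ : 0 < β) :
    shrinkageObjective α β B (shrinkage α β B)
      = α * max (‖B‖ - α / β) 0 + β / 2 * (max (‖B‖ - α / β) 0 - ‖B‖) ^ 2 := by
  rw [shrinkageObjective, norm_shrinkage hα hβ, norm_shrinkage_sub hα hβ]
  ring

theorem shrinkageObjective_shrinkage_le (hα : 0 ≤ α) (hβ : 0 < β) (y : E) :
    shrinkageObjective α β B (shrinkage α β B) ≤ shrinkageObjective α β B y := by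
  refine le_trans ?_ (le_shrinkageObjective hβ.le y)
  rw [shrinkageObjective_shrinkage hα hβ]
  rcases eq_or_ne ‖y‖ (max (‖B‖ - α / β) 0) with h | h
  · rw [h]
  · exact (soft_threshold_scalar_lt hβ (norm_nonneg y) h).le

variable [StrictConvexSpace ℝ E]

theorem eq_shrinkage_of_shrinkageObjective_le (hα : 0 ≤ α) (hβ : 0 < β) {y : E}
    (hy : shrinkageObjective α β B y ≤ shrinkageObjective α β B (shrinkage α β B)) :
    y = shrinkage α β B := by
  set t := max (‖B‖ - α / β) 0 with ht_def
  rw [shrinkageObjective_shrinkage hα hβ] at hy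
  have hnorm : ‖y‖ = t := by
    by_contra hne
    have := soft_threshold_scalar_lt (b := ‖B‖) hβ (norm_nonneg y) hne
    linarith [le_shrinkageObjective (α := α) (B := B) hβ.le y]
  have htb : t ≤ ‖B‖ := max_sub_div_zero_le hα hβ (norm_nonneg B)
  have hdist : ‖B - y‖ ≤ ‖B‖ - t := by
    rw [shrinkageObjective, hnorm] at hy
    have hsq : ‖B - y‖ ^ 2 ≤ (‖B‖ - t) ^ 2 := by
      rw [norm_sub_rev]
      nlinarith
    exact (sq_le_sq₀ (norm_nonneg _) (sub_nonneg.mpr htb)).mp hsq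
  -- equality in the triangle inequality `‖B‖ ≤ ‖y‖ + ‖B - y‖`
  have hray : SameRay ℝ y B := by
    have hsplit : SameRay ℝ y (B - y) := by
      refine sameRay_iff_norm_add.mpr (le_antisymm (norm_add_le _ _) ?_)
      rw [add_sub_cancel]
      linarith
    simpa using (SameRay.refl y).add_right hsplit
  rcases eq_or_ne B 0 with rfl | hB
  · have hy0 : y = 0 :=
      norm_eq_zero.mp (hnorm.trans (le_antisymm (by simpa using htb) (le_max_right _ _)))
    simp [hy0, shrinkage]
  · rw [shrinkage, ← ht_def, ← hnorm, smul_comm, hray.norm_smul_eq, smul_smul,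
      inv_mul_cancel₀ (norm_ne_zero_iff.mpr hB), one_smul]

end Shrinkage

theorem stmt0_general (n : ℕ) (B : EuclideanSpace ℂ (Fin n))
    (α β : ℝ) (hα : 0 < α) (hβ : 0 < β)
    (f : EuclideanSpace ℂ (Fin n) → ℝ)
    (hf : ∀ x, f x = α * ‖x‖ + β / 2 * ‖x - B‖ ^ 2)
    (xhat : EuclideanSpace ℂ (Fin n))
    (hxhat : xhat = max (‖B‖ - α / β) 0 • (‖B‖⁻¹ • B)) :
    (∀ y, f xhat ≤ f y) ∧ ∀ y, (∀ z, f y ≤ f z) → y = xhat := by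
  obtain rfl : f = shrinkageObjective α β B := funext hf
  obtain rfl : xhat = shrinkage α β B := hxhat
  exact ⟨shrinkageObjective_shrinkage_le hα.le hβ,
    fun y hy => eq_shrinkage_of_shrinkageObjective_le hα.le hβ (hy _)⟩

/-- complex soft-thresholding. For nonzero `B ∈ ℂ^n` and `α, β > 0`,
the unique minimizer of `f x = α‖x‖ + (β/2)‖x - B‖²` is
`max (‖B‖ - α/β) 0 • (‖B‖⁻¹ • B)`. -/
theorem stmt0 (n : ℕ) (B : EuclideanSpace ℂ (Fin n)) (hB : B ≠ 0)
    (α β : ℝ) (hα : 0 < α) (hβ : 0 < β)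
    (f : EuclideanSpace ℂ (Fin n) → ℝ)
    (hf : ∀ x, f x = α * ‖x‖ + β / 2 * ‖x - B‖ ^ 2)
    (xhat : EuclideanSpace ℂ (Fin n))
    (hxhat : xhat = max (‖B‖ - α / β) 0 • (‖B‖⁻¹ • B)) :
    (∀ y, f xhat ≤ f y) ∧ ∀ y, (∀ z, f y ≤ f z) → y = xhat :=
  stmt0_general n B α β hα hβ f hf xhat hxhat
end

section
/- Let A ∈ ℂ^{L×(KN)} be partitioned into blocks A = [A₁, …, A_K] with A_i ∈ ℂ^{L×N}, let B ∈ ℂ^{L×(GM)}, let W be a matrix of strictly positive real weights with row-chunk blocks W_i, and let α₁ > 0. If α₁ ≥ max_i ‖(A_iᴴ B) ∘ W_i^{∘(−1)}‖_F, then X = 0 minimizes F(X) = α₁ Σ_{i=1}^K ‖W_i ∘ X_i‖_F + (1/2)‖AX − B‖_F², where X_i denotes the i-th row-chunk block of X ∈ ℂ^{(KN)×(GM)}. -/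
/-!
Flattening a matrix into `EuclideanSpace ℂ (m × n)` turns `fnorm4` into the Euclidean norm and
`tr (Q Pᴴ)` into the inner product `⟪P, Q⟫`. Expanding the square gives
`F X - F 0 = α₁ ∑ᵢ ‖Wᵢ ∘ Xᵢ‖ + ½ ‖A X‖² - Re ⟪B, A X⟫`, and
`Re ⟪B, A X⟫ = ∑ᵢ Re ⟪Aᵢᴴ B, Xᵢ⟫ ≤ ∑ᵢ ‖(Aᵢᴴ B) ∘ Wᵢ^{∘(-1)}‖ ‖Wᵢ ∘ Xᵢ‖` by Cauchy–Schwarz,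
after moving the real weights from one factor of the inner product to the other.
-/

open Finset Matrix
/-- Frobenius norm of a complex matrix. -/
noncomputable def fnorm4 {m n : Type*} [Fintype m] [Fintype n]
    (M : Matrix m n ℂ) : ℝ :=
  Real.sqrt (∑ i, ∑ j, ‖M i j‖ ^ 2)

open scoped InnerProductSpace ComplexConjugate

section
variable {m n : Type*}

def toEuclideanVec : Matrix m n ℂ →ₗ[ℂ] EuclideanSpace ℂ (m × n) where
  toFun M := WithLp.toLp 2 fun p => M p.1 p.2
  map_add' _ _ := rfl
  map_smul' _ _ := rfl

@[simp]
lemma toEuclideanVec_apply (M : Matrix m n ℂ) (p : m × n) : toEuclideanVec M p = M p.1 p.2 := rfl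

variable [Fintype m] [Fintype n]

lemma fnorm4_eq_norm_toEuclideanVec (M : Matrix m n ℂ) : fnorm4 M = ‖toEuclideanVec M‖ := by
  rw [EuclideanSpace.norm_eq, fnorm4, Fintype.sum_prod_type]
  rfl

lemma fnorm4_nonneg (M : Matrix m n ℂ) : 0 ≤ fnorm4 M := Real.sqrt_nonneg _

lemma inner_toEuclideanVec (P Q : Matrix m n ℂ) :
    ⟪toEuclideanVec P, toEuclideanVec Q⟫_ℂ = ∑ a, ∑ b, conj (P a b) * Q a b := by
  rw [PiLp.inner_apply, Fintype.sum_prod_type]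
  simp [mul_comm]

lemma inner_toEuclideanVec_eq_trace (P Q : Matrix m n ℂ) :
    ⟪toEuclideanVec P, toEuclideanVec Q⟫_ℂ = (Q * Pᴴ).trace := by
  simp [inner_toEuclideanVec, trace, mul_apply, mul_comm]

lemma inner_toEuclideanVec_mul {l : Type*} [Fintype l] (A : Matrix l m ℂ) (B : Matrix l n ℂ)
    (X : Matrix m n ℂ) :
    ⟪toEuclideanVec B, toEuclideanVec (A * X)⟫_ℂ =
      ⟪toEuclideanVec (Aᴴ * B), toEuclideanVec X⟫_ℂ := by
  rw [inner_toEuclideanVec_eq_trace, inner_toEuclideanVec_eq_trace, conjTranspose_mul,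
    conjTranspose_conjTranspose, Matrix.mul_assoc, trace_mul_comm, Matrix.mul_assoc]

lemma re_inner_toEuclideanVec_le_weighted (C X : Matrix m n ℂ) (W : Matrix m n ℝ)
    (hW : ∀ a b, W a b ≠ 0) :
    (⟪toEuclideanVec C, toEuclideanVec X⟫_ℂ).re ≤
      fnorm4 (fun a b => C a b * ((W a b)⁻¹ : ℝ)) * fnorm4 (fun a b => (W a b : ℂ) * X a b) := by
  set C' : Matrix m n ℂ := fun a b => C a b * ((W a b)⁻¹ : ℝ)
  set X' : Matrix m n ℂ := fun a b => (W a b : ℂ) * X a b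
  have reweight :
      ⟪toEuclideanVec C, toEuclideanVec X⟫_ℂ = ⟪toEuclideanVec C', toEuclideanVec X'⟫_ℂ := by
    rw [inner_toEuclideanVec, inner_toEuclideanVec]
    refine sum_congr rfl fun a _ => sum_congr rfl fun b _ => ?_
    have : (W a b : ℂ) ≠ 0 := by exact_mod_cast hW a b
    simp only [C', X', map_mul, Complex.ofReal_inv, map_inv₀, Complex.conj_ofReal]
    field_simp
  rw [reweight, fnorm4_eq_norm_toEuclideanVec, fnorm4_eq_norm_toEuclideanVec]
  exact re_inner_le_norm (𝕜 := ℂ) _ _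
end

theorem stmt4_general (L K N G M : ℕ)
    (A : Fin K → Matrix (Fin L) (Fin N) ℂ)
    (B : Matrix (Fin L) (Fin (G * M)) ℂ)
    (W : Fin K → Matrix (Fin N) (Fin (G * M)) ℝ)
    (hW : ∀ i a b, 0 < W i a b)
    (α₁ : ℝ)
    (hthr : ∀ i, fnorm4 (fun a b => ((A i)ᴴ * B) a b * ((W i a b)⁻¹ : ℝ)) ≤ α₁)
    (F : (Fin K → Matrix (Fin N) (Fin (G * M)) ℂ) → ℝ)
    (hF : ∀ X, F X = α₁ * ∑ i, fnorm4 (fun a b => (W i a b : ℂ) * X i a b)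
        + 1 / 2 * (fnorm4 ((∑ i, A i * X i) - B)) ^ 2) :
    ∀ X, F 0 ≤ F X := by
  intro X
  have hF0 : F 0 = 1 / 2 * ‖toEuclideanVec B‖ ^ 2 := by
    rw [← fnorm4_eq_norm_toEuclideanVec]
    simp [hF, fnorm4]
  have cross : (⟪toEuclideanVec B, toEuclideanVec (∑ i, A i * X i)⟫_ℂ).re ≤
      α₁ * ∑ i, fnorm4 (fun a b => (W i a b : ℂ) * X i a b) := by
    rw [map_sum, inner_sum, Complex.re_sum, mul_sum]
    refine sum_le_sum fun i _ => ?_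
    rw [inner_toEuclideanVec_mul]
    exact (re_inner_toEuclideanVec_le_weighted _ _ _ fun a b => (hW i a b).ne').trans
      (mul_le_mul_of_nonneg_right (hthr i) (fnorm4_nonneg _))
  rw [hF0, hF, fnorm4_eq_norm_toEuclideanVec, map_sub, norm_sub_sq (𝕜 := ℂ),
    inner_re_symm (𝕜 := ℂ), RCLike.re_to_complex]
  linarith [cross, sq_nonneg ‖toEuclideanVec (∑ i, A i * X i)‖]

/-- if `α₁ ≥ max_i ‖(Aᵢᴴ B) ∘ Wᵢ^{∘(-1)}‖_F`, then `X = 0` minimizes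
`F X = α₁ ∑ᵢ ‖Wᵢ ∘ Xᵢ‖_F + (1/2)‖A X - B‖_F²`, where `A = [A₁,…,A_K]` acts on
row-chunked `X` via `A X = ∑ᵢ Aᵢ Xᵢ`. -/
theorem stmt4 (L K N G M : ℕ)
    (A : Fin K → Matrix (Fin L) (Fin N) ℂ)
    (B : Matrix (Fin L) (Fin (G * M)) ℂ)
    (W : Fin K → Matrix (Fin N) (Fin (G * M)) ℝ)
    (hW : ∀ i a b, 0 < W i a b)
    (α₁ : ℝ) (hα₁ : 0 < α₁)
    (hthr : ∀ i, fnorm4 (fun a b => ((A i)ᴴ * B) a b * ((W i a b)⁻¹ : ℝ)) ≤ α₁)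
    (F : (Fin K → Matrix (Fin N) (Fin (G * M)) ℂ) → ℝ)
    (hF : ∀ X, F X = α₁ * ∑ i, fnorm4 (fun a b => (W i a b : ℂ) * X i a b)
        + 1 / 2 * (fnorm4 ((∑ i, A i * X i) - B)) ^ 2) :
    ∀ X, F 0 ≤ F X :=
  stmt4_general L K N G M A B W hW α₁ hthr F hF
end

section
/- With the setting of the weighted group-lasso functional F(X) = α₁ Σ_{i=1}^K ‖W_i ∘ X_i‖_F + (1/2)‖AX − B‖_F², the zero matrix is a minimizer of F if and only if ‖(A_iᴴ B) ∘ W_i^{∘(−1)}‖_F ≤ α₁ for all i = 1, …, K. -/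
open Finset Matrix

noncomputable def fnorm5 {m n : Type*} [Fintype m] [Fintype n]
    (M : Matrix m n ℂ) : ℝ :=
  Real.sqrt (∑ i, ∑ j, ‖M i j‖ ^ 2)

/-!
Substituting `Yᵢ = Wᵢ ∘ Xᵢ` and flattening matrices to Euclidean vectors turns `F` into a
group-lasso objective `Φ Y = α ∑ ‖Yᵢ‖ + ½ ‖∑ Tᵢ Yᵢ - b‖²`, where `cᵢ = Tᵢ* b` is the flattening
of `(Aᵢᴴ B) ∘ Wᵢ^{∘(-1)}`. Expanding the square,
`Φ Y - Φ 0 = ∑ (α ‖Yᵢ‖ - Re ⟪Yᵢ, cᵢ⟫) + ½ ‖∑ Tᵢ Yᵢ‖²`.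
If every `‖cᵢ‖ ≤ α`, each summand is nonnegative by Cauchy–Schwarz. Conversely, putting `t cᵢ` in
block `i` and `0` elsewhere gives `0 ≤ t ‖cᵢ‖ (α - ‖cᵢ‖) + O(t²)` for all `t > 0`.
-/

open RCLike
open scoped InnerProductSpace

open Filter Topology in
lemma nonneg_of_forall_pos_mul_add_sq_mul_nonneg {a q : ℝ}
    (h : ∀ t : ℝ, 0 < t → 0 ≤ t * a + t ^ 2 * q) : 0 ≤ a := by
  have hlim : Tendsto (fun t : ℝ => a + t * q) (𝓝[>] 0) (𝓝 a) := by
    have : Continuous fun t : ℝ => a + t * q := by fun_prop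
    simpa using (this.tendsto 0).mono_left nhdsWithin_le_nhds
  refine ge_of_tendsto hlim (eventually_nhdsWithin_of_forall fun t (ht : 0 < t) => ?_)
  exact nonneg_of_mul_nonneg_right (by linear_combination h t ht) ht

lemma Fintype.sum_apply_pi_single {ι M : Type*} [Fintype ι] [DecidableEq ι] [AddCommMonoid M]
    {E : ι → Type*} [∀ j, Zero (E j)] (f : ∀ j, E j → M) (hf : ∀ j, f j 0 = 0) (i : ι)
    (x : E i) : ∑ j, f j (Pi.single i x j) = f i x := by
  rw [Fintype.sum_eq_single i fun j hj => by rw [Pi.single_eq_of_ne hj, hf], Pi.single_eq_same]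

section GroupLasso

variable {𝕜 ι H : Type*} [RCLike 𝕜] [Fintype ι] {E : ι → Type*}
  [∀ i, NormedAddCommGroup (E i)] [∀ i, InnerProductSpace 𝕜 (E i)]
  [NormedAddCommGroup H] [InnerProductSpace 𝕜 H]

noncomputable def groupLasso (α : ℝ) (T : ∀ i, E i →ₗ[𝕜] H) (b : H) (y : ∀ i, E i) : ℝ :=
  α * ∑ i, ‖y i‖ + 1 / 2 * ‖∑ i, T i (y i) - b‖ ^ 2

variable {α : ℝ} {T : ∀ i, E i →ₗ[𝕜] H} {b : H} {c : ∀ i, E i}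

lemma groupLasso_sub_groupLasso_zero (hc : ∀ i y, ⟪T i y, b⟫_𝕜 = ⟪y, c i⟫_𝕜) (y : ∀ i, E i) :
    groupLasso α T b y - groupLasso α T b 0 =
      ∑ i, (α * ‖y i‖ - re ⟪y i, c i⟫_𝕜) + 1 / 2 * ‖∑ i, T i (y i)‖ ^ 2 := by
  simp only [groupLasso, norm_sub_sq (𝕜 := 𝕜), sum_inner, hc, map_sum, Pi.zero_apply, map_zero,
    norm_zero, sum_const_zero, inner_zero_left]
  rw [Finset.sum_sub_distrib, ← Finset.mul_sum]
  ring

lemma groupLasso_zero_le (hc : ∀ i y, ⟪T i y, b⟫_𝕜 = ⟪y, c i⟫_𝕜) (hcα : ∀ i, ‖c i‖ ≤ α)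
    (y : ∀ i, E i) : groupLasso α T b 0 ≤ groupLasso α T b y := by
  have hblock : ∀ i, 0 ≤ α * ‖y i‖ - re ⟪y i, c i⟫_𝕜 := fun i =>
    calc 0 ≤ α * ‖y i‖ - ‖y i‖ * ‖c i‖ := by nlinarith [norm_nonneg (y i), hcα i]
      _ ≤ α * ‖y i‖ - re ⟪y i, c i⟫_𝕜 := by linarith [re_inner_le_norm (𝕜 := 𝕜) (y i) (c i)]
  have := groupLasso_sub_groupLasso_zero (α := α) hc y
  nlinarith [Finset.sum_nonneg fun i (_ : i ∈ univ) => hblock i, norm_nonneg (∑ i, T i (y i))]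

lemma norm_le_of_groupLasso_zero_le (hα : 0 ≤ α) (hc : ∀ i y, ⟪T i y, b⟫_𝕜 = ⟪y, c i⟫_𝕜)
    (hmin : ∀ y, groupLasso α T b 0 ≤ groupLasso α T b y) (i : ι) : ‖c i‖ ≤ α := by
  classical
  have hdescent : 0 ≤ ‖c i‖ * (α - ‖c i‖) := by
    refine nonneg_of_forall_pos_mul_add_sq_mul_nonneg (q := 1 / 2 * ‖T i (c i)‖ ^ 2) fun t ht => ?_
    have key := groupLasso_sub_groupLasso_zero (α := α) hc (Pi.single i ((t : 𝕜) • c i))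
    rw [Fintype.sum_apply_pi_single (fun j y => α * ‖y‖ - re ⟪y, c j⟫_𝕜) (fun j => by simp),
      Fintype.sum_apply_pi_single (fun j y => T j y) (fun j => by simp)] at key
    simp only [map_smul, norm_smul, inner_smul_left, inner_self_eq_norm_sq_to_K, conj_ofReal,
      ← ofReal_pow, ← ofReal_mul, ofReal_re, norm_ofReal, abs_of_pos ht] at key
    linarith [hmin (Pi.single i ((t : 𝕜) • c i))]
  rcases (norm_nonneg (c i)).eq_or_lt with h0 | hpos
  · rw [← h0]; exact hα
  · exact sub_nonneg.mp (nonneg_of_mul_nonneg_right hdescent hpos)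

theorem groupLasso_zero_le_iff (hα : 0 ≤ α) (hc : ∀ i y, ⟪T i y, b⟫_𝕜 = ⟪y, c i⟫_𝕜) :
    (∀ y, groupLasso α T b 0 ≤ groupLasso α T b y) ↔ ∀ i, ‖c i‖ ≤ α :=
  ⟨norm_le_of_groupLasso_zero_le hα hc, groupLasso_zero_le hc⟩

end GroupLasso

namespace Matrix

variable {𝕜 l m n : Type*} [RCLike 𝕜]

noncomputable def toEuclideanSpace : Matrix m n 𝕜 ≃ₗ[𝕜] EuclideanSpace 𝕜 (m × n) :=
  (LinearEquiv.curry 𝕜 𝕜 m n).symm.trans (WithLp.linearEquiv 2 𝕜 (m × n → 𝕜)).symm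

@[simp]
lemma toEuclideanSpace_apply (M : Matrix m n 𝕜) (p : m × n) :
    toEuclideanSpace M p = M p.1 p.2 := rfl

@[simps]
def hadamardLinearMap (V : Matrix m n 𝕜) : Matrix m n 𝕜 →ₗ[𝕜] Matrix m n 𝕜 where
  toFun := (V ⊙ ·)
  map_add' X Y := hadamard_add V X Y
  map_smul' c X := hadamard_smul V X c

lemma hadamard_hadamard_cancel {α : Type*} [Monoid α] {V V' : Matrix m n α}
    (h : ∀ a b, V a b * V' a b = 1) (X : Matrix m n α) : V ⊙ (V' ⊙ X) = X := by
  ext a b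
  simp only [hadamard_apply, ← mul_assoc, h, one_mul]

variable [Fintype m]

noncomputable def weightedMulLeft (A : Matrix l m 𝕜) (V : Matrix m n 𝕜) :
    EuclideanSpace 𝕜 (m × n) →ₗ[𝕜] EuclideanSpace 𝕜 (l × n) :=
  toEuclideanSpace.toLinearMap ∘ₗ mulLeftLinearMap n 𝕜 A ∘ₗ hadamardLinearMap V ∘ₗ
    toEuclideanSpace.symm.toLinearMap

lemma weightedMulLeft_toEuclideanSpace_hadamard (A : Matrix l m 𝕜) {V V' : Matrix m n 𝕜}
    (h : ∀ a b, V a b * V' a b = 1) (X : Matrix m n 𝕜) :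
    weightedMulLeft A V (toEuclideanSpace (V' ⊙ X)) = toEuclideanSpace (A * X) := by
  simp [weightedMulLeft, hadamard_hadamard_cancel h]

variable [Fintype l] [Fintype n]

lemma inner_toEuclideanSpace (U V : Matrix m n 𝕜) :
    ⟪toEuclideanSpace U, toEuclideanSpace V⟫_𝕜 = trace (Uᴴ * V) := by
  simp only [PiLp.inner_apply, RCLike.inner_apply, trace, diag, mul_apply, conjTranspose_apply,
    Fintype.sum_prod_type, toEuclideanSpace_apply]
  rw [Finset.sum_comm]
  simp only [RCLike.star_def, mul_comm]

lemma inner_toEuclideanSpace_mul_left (A : Matrix l m 𝕜) (X : Matrix m n 𝕜)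
    (B : Matrix l n 𝕜) :
    ⟪toEuclideanSpace (A * X), toEuclideanSpace B⟫_𝕜 =
      ⟪toEuclideanSpace X, toEuclideanSpace (Aᴴ * B)⟫_𝕜 := by
  rw [inner_toEuclideanSpace, inner_toEuclideanSpace, conjTranspose_mul, Matrix.mul_assoc]

lemma inner_toEuclideanSpace_hadamard_left (V X Y : Matrix m n 𝕜) :
    ⟪toEuclideanSpace (V ⊙ X), toEuclideanSpace Y⟫_𝕜 =
      ⟪toEuclideanSpace X, toEuclideanSpace (V.map star ⊙ Y)⟫_𝕜 := by
  simp only [PiLp.inner_apply, RCLike.inner_apply, toEuclideanSpace_apply, hadamard_apply,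
    map_apply, map_mul, RCLike.star_def]
  exact Finset.sum_congr rfl fun _ _ => by ring

lemma inner_weightedMulLeft (A : Matrix l m 𝕜) (V : Matrix m n 𝕜)
    (y : EuclideanSpace 𝕜 (m × n)) (B : Matrix l n 𝕜) :
    ⟪weightedMulLeft A V y, toEuclideanSpace B⟫_𝕜 =
      ⟪y, toEuclideanSpace (V.map star ⊙ (Aᴴ * B))⟫_𝕜 := by
  rw [weightedMulLeft, LinearMap.comp_apply, LinearMap.comp_apply, LinearMap.comp_apply,
    LinearEquiv.coe_coe, LinearEquiv.coe_coe, mulLeftLinearMap_apply, hadamardLinearMap_apply,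
    inner_toEuclideanSpace_mul_left, inner_toEuclideanSpace_hadamard_left,
    LinearEquiv.apply_symm_apply]

end Matrix

lemma fnorm5_eq_norm_toEuclideanSpace {m n : Type*} [Fintype m] [Fintype n] (M : Matrix m n ℂ) :
    fnorm5 M = ‖Matrix.toEuclideanSpace M‖ := by
  simp [fnorm5, EuclideanSpace.norm_eq, Fintype.sum_prod_type]

open Matrix in
/-- zero is a minimizer of the weighted group-lasso functional
`F X = α₁ ∑ᵢ ‖Wᵢ ∘ Xᵢ‖_F + (1/2)‖A X - B‖_F²` if and only if
`‖(Aᵢᴴ B) ∘ Wᵢ^{∘(-1)}‖_F ≤ α₁` for all `i`. -/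
theorem stmt5 (L K N G M : ℕ)
    (A : Fin K → Matrix (Fin L) (Fin N) ℂ)
    (B : Matrix (Fin L) (Fin (G * M)) ℂ)
    (W : Fin K → Matrix (Fin N) (Fin (G * M)) ℝ)
    (hW : ∀ i a b, 0 < W i a b)
    (α₁ : ℝ) (hα₁ : 0 < α₁)
    (F : (Fin K → Matrix (Fin N) (Fin (G * M)) ℂ) → ℝ)
    (hF : ∀ X, F X = α₁ * ∑ i, fnorm5 (fun a b => (W i a b : ℂ) * X i a b)
        + 1 / 2 * (fnorm5 ((∑ i, A i * X i) - B)) ^ 2) :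
    (∀ X, F 0 ≤ F X) ↔
      ∀ i, fnorm5 (fun a b => ((A i)ᴴ * B) a b * ((W i a b)⁻¹ : ℝ)) ≤ α₁ := by
  set ω : Fin K → Matrix (Fin N) (Fin (G * M)) ℂ := fun i => (W i).map (↑)
  set ω' : Fin K → Matrix (Fin N) (Fin (G * M)) ℂ := fun i => (W i).map fun w => ((w⁻¹ : ℝ) : ℂ)
  have hωω' : ∀ i a b, ω i a b * ω' i a b = 1 := fun i a b => by
    have : (W i a b : ℂ) ≠ 0 := by exact_mod_cast (hW i a b).ne'
    simp only [ω, ω', Matrix.map_apply, Complex.ofReal_inv, mul_inv_cancel₀ this]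
  set T := fun i => weightedMulLeft (A i) (ω' i)
  set b := toEuclideanSpace B
  set Y : (Fin K → Matrix (Fin N) (Fin (G * M)) ℂ) → Fin K → EuclideanSpace ℂ _ :=
    fun X i => toEuclideanSpace (ω i ⊙ X i)
  have hc : ∀ i y, ⟪T i y, b⟫_ℂ = ⟪y, toEuclideanSpace (((A i)ᴴ * B) ⊙ ω' i)⟫_ℂ := fun i y => by
    have hreal : (ω' i).map star = ω' i := by ext; simp [ω']
    rw [inner_weightedMulLeft, hreal, hadamard_comm]
  have hFY : ∀ X, F X = groupLasso α₁ T b (Y X) := fun X => by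
    simp only [hF, groupLasso, Y, T, weightedMulLeft_toEuclideanSpace_hadamard _
      fun a b => (mul_comm _ _).trans (hωω' _ a b), ← map_sum,
      fnorm5_eq_norm_toEuclideanSpace (_ - B)]
    congr 2
    exact sum_congr rfl fun i _ => fnorm5_eq_norm_toEuclideanSpace (ω i ⊙ X i)
  have hY : Function.Surjective Y := fun y => ⟨fun i => ω' i ⊙ toEuclideanSpace.symm (y i),
    funext fun i => by simp [Y, hadamard_hadamard_cancel (hωω' i)]⟩
  have hY0 : Y 0 = 0 := funext fun i => by simp [Y]
  calc (∀ X, F 0 ≤ F X) ↔ ∀ y, groupLasso α₁ T b 0 ≤ groupLasso α₁ T b y := by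
        simp only [hFY, hY0]
        exact (hY.forall (p := fun y => _ ≤ groupLasso α₁ T b y)).symm
    _ ↔ ∀ i, ‖toEuclideanSpace (((A i)ᴴ * B) ⊙ ω' i)‖ ≤ α₁ := groupLasso_zero_le_iff hα₁.le hc
    _ ↔ _ := forall_congr' fun i => by rw [← fnorm5_eq_norm_toEuclideanSpace]; rfl
end
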